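/- Let T and T′ be two strings over a finite alphabet A such that T′ is obtained from T by r single-character edit operations (each a replacement, insertion, or deletion), with |T| = n, |T′| = n′, and n′ ≤ n + r. Then for any k ≥ 0, |n·H_k(T) − n′·H_k(T′)| = O(r·(k+1)·(log₂(n+r) + log₂|A|)). -/

import Mathlib

/-!
Write `f m = m log₂ m`. If `m_{s,c}` counts the positions of `T` that carry `c` after the
context `s`, then `n·H_k(T) = ∑ₛ (f (∑_c m_{s,c}) - ∑_c f m_{s,c})`. An edit only changes the
(context, character) pairs at the at most `k + 1` positions whose window of length `k + 1`
meets it, so the multiset of pairs loses and gains at most `k + 1` elements. On `{0, …, N}`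
the increments of `f` lie in `[0, log₂ N + 2]`, so one edit moves `n·H_k` by
`O((k + 1) log N)`; along the `r` edits all lengths stay below `n + r`. The additive constant
is absorbed by `log₂ |A| ≥ 1`, except when `|A| ≤ 1`, where `H_k` vanishes.
-/

open Finset

def ctxStr {A : Type*} [DecidableEq A] (T s : List A) : List A :=
  ((List.range T.length).filter (fun i =>
      decide (s.length ≤ i ∧ (T.drop (i - s.length)).take s.length = s))).filterMap
    (fun i => T[i]?)

noncomputable def H0 {A : Type*} [Fintype A] [DecidableEq A] (T : List A) : ℝ :=
  -∑ c : A, ((T.count c : ℝ) / T.length) * Real.logb 2 ((T.count c : ℝ) / T.length)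

noncomputable def Hk {A : Type*} [Fintype A] [DecidableEq A] (k : ℕ) (T : List A) : ℝ :=
  (1 / (T.length : ℝ)) *
    ∑ s : Fin k → A, ((ctxStr T (List.ofFn s)).length : ℝ) * H0 (ctxStr T (List.ofFn s))

def Edit {A : Type} (T T' : List A) : Prop :=
  (∃ (T₁ T₂ : List A) (c c' : A), T = T₁ ++ c :: T₂ ∧ T' = T₁ ++ c' :: T₂) ∨
  (∃ (T₁ T₂ : List A) (c : A), T = T₁ ++ T₂ ∧ T' = T₁ ++ c :: T₂) ∨
  (∃ (T₁ T₂ : List A) (c : A), T = T₁ ++ c :: T₂ ∧ T' = T₁ ++ T₂)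

noncomputable def natMulLog2 (m : ℕ) : ℝ := m * Real.logb 2 m

lemma logb_two_natCast_nonneg (m : ℕ) : 0 ≤ Real.logb 2 m :=
  div_nonneg (Real.log_natCast_nonneg m) (Real.log_nonneg one_le_two)

lemma natMulLog2_monotone : Monotone natMulLog2 := by
  refine monotone_nat_of_le_succ fun m => ?_
  rcases Nat.eq_zero_or_pos m with rfl | hm
  · simp [natMulLog2]
  · have hm1 : (1 : ℝ) ≤ m := by exact_mod_cast hm
    unfold natMulLog2
    push_cast
    gcongr
    · exact Real.logb_nonneg one_lt_two hm1
    · linarith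
    · norm_num
    · linarith

lemma natMulLog2_succ_sub_le {m N : ℕ} (hm : m + 1 ≤ N) :
    natMulLog2 (m + 1) - natMulLog2 m ≤ Real.logb 2 N + 2 := by
  rcases Nat.eq_zero_or_pos m with rfl | hm0
  · simpa [natMulLog2] using
      (by linarith [logb_two_natCast_nonneg N] : (0 : ℝ) ≤ Real.logb 2 N + 2)
  have hm0' : (0 : ℝ) < m := by exact_mod_cast hm0
  have hlog2 : (1 / 2 : ℝ) < Real.log 2 := by linarith [Real.log_two_gt_d9]
  -- `log (1 + 1/m) ≤ 1/m`
  have hgap : (m : ℝ) * (Real.log (m + 1) - Real.log m) ≤ 1 := by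
    rw [← Real.log_div (by positivity) hm0'.ne']
    have := Real.log_le_sub_one_of_pos (x := ((m : ℝ) + 1) / m) (by positivity)
    calc (m : ℝ) * Real.log ((m + 1) / m) ≤ m * ((m + 1) / m - 1) := by gcongr
      _ = 1 := by field_simp; ring
  have hgrow : Real.logb 2 ((m : ℝ) + 1) ≤ Real.logb 2 N :=
    Real.logb_le_logb_of_le one_lt_two (by positivity) (by exact_mod_cast hm)
  have hsplit : natMulLog2 (m + 1) - natMulLog2 m
      = Real.logb 2 ((m : ℝ) + 1) + (m * (Real.log (m + 1) - Real.log m)) / Real.log 2 := by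
    simp only [natMulLog2, Real.logb]; push_cast; ring
  have : (m * (Real.log (m + 1) - Real.log m)) / Real.log 2 ≤ 2 := by
    rw [div_le_iff₀ (by linarith)]; linarith
  linarith

lemma natMulLog2_sub_le {a b N : ℕ} (hab : a ≤ b) (hb : b ≤ N) :
    natMulLog2 b - natMulLog2 a ≤ (b - a) * (Real.logb 2 N + 2) := by
  induction b, hab using Nat.le_induction with
  | base => simp
  | succ n han ih =>
    have := natMulLog2_succ_sub_le hb
    have := ih (by omega)
    push_cast
    linarith

lemma abs_natMulLog2_sub_le {a b N : ℕ} (ha : a ≤ N) (hb : b ≤ N) :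
    |natMulLog2 a - natMulLog2 b| ≤ |(a : ℝ) - b| * (Real.logb 2 N + 2) := by
  wlog hab : a ≤ b generalizing a b
  · rw [abs_sub_comm, abs_sub_comm (a : ℝ)]
    exact this hb ha (by omega)
  have hmono := natMulLog2_monotone hab
  have hcast : (a : ℝ) ≤ b := by exact_mod_cast hab
  rw [abs_sub_comm, abs_of_nonneg (by linarith), abs_sub_comm, abs_of_nonneg (by linarith)]
  exact natMulLog2_sub_le hab hb

section TotalEntropy

variable {κ : Type*} [Fintype κ]

/-- `(∑ j, a j) · H₀` of the distribution with counts `a`. -/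
noncomputable def totalEntropy (a : κ → ℕ) : ℝ :=
  natMulLog2 (∑ j, a j) - ∑ j, natMulLog2 (a j)

lemma abs_totalEntropy_sub_le {N : ℕ} (a b : κ → ℕ) (ha : ∑ j, a j ≤ N) (hb : ∑ j, b j ≤ N) :
    |totalEntropy a - totalEntropy b| ≤ 2 * (Real.logb 2 N + 2) * ∑ j, |(a j : ℝ) - b j| := by
  have hB : 0 ≤ Real.logb 2 N + 2 := by linarith [logb_two_natCast_nonneg N]
  have hsum : |natMulLog2 (∑ j, a j) - natMulLog2 (∑ j, b j)|
      ≤ (∑ j, |(a j : ℝ) - b j|) * (Real.logb 2 N + 2) := by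
    refine (abs_natMulLog2_sub_le ha hb).trans (mul_le_mul_of_nonneg_right ?_ hB)
    push_cast
    rw [← Finset.sum_sub_distrib]
    exact Finset.abs_sum_le_sum_abs _ _
  have hterms : |∑ j, (natMulLog2 (a j) - natMulLog2 (b j))|
      ≤ (∑ j, |(a j : ℝ) - b j|) * (Real.logb 2 N + 2) := by
    rw [Finset.sum_mul]
    refine (Finset.abs_sum_le_sum_abs _ _).trans (Finset.sum_le_sum fun j _ => ?_)
    exact abs_natMulLog2_sub_le ((Finset.single_le_sum (by simp) (Finset.mem_univ j)).trans ha)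
      ((Finset.single_le_sum (by simp) (Finset.mem_univ j)).trans hb)
  calc |totalEntropy a - totalEntropy b|
      = |(natMulLog2 (∑ j, a j) - natMulLog2 (∑ j, b j))
          - ∑ j, (natMulLog2 (a j) - natMulLog2 (b j))| := by
        rw [totalEntropy, totalEntropy, Finset.sum_sub_distrib]; ring_nf
    _ ≤ _ := (abs_sub _ _).trans (add_le_add hsum hterms)
    _ = _ := by ring

end TotalEntropy

lemma length_mul_H0 {A : Type*} [Fintype A] [DecidableEq A] (S : List A) :
    S.length * H0 S = totalEntropy (fun c => S.count c) := by
  have hcount : ∑ c, S.count c = S.length := by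
    simpa using Multiset.sum_count_eq_card (s := Finset.univ) (m := (S : Multiset A)) (by simp)
  have hcount' : ∑ c, (S.count c : ℝ) = S.length := by exact_mod_cast hcount
  rcases Nat.eq_zero_or_pos S.length with hS | hS
  · simp [List.length_eq_zero_iff.mp hS, totalEntropy, natMulLog2]
  have hS' : (0 : ℝ) < S.length := by exact_mod_cast hS
  have hterm : ∀ c, -(S.length *
        ((S.count c : ℝ) / S.length * Real.logb 2 ((S.count c : ℝ) / S.length)))
      = S.count c * Real.logb 2 S.length - natMulLog2 (S.count c) := by
    intro c
    rcases Nat.eq_zero_or_pos (S.count c) with hc | hc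
    · simp [hc, natMulLog2]
    rw [Real.logb_div (by positivity) hS'.ne', natMulLog2]
    field_simp
    ring
  rw [totalEntropy, hcount, H0, mul_neg, Finset.mul_sum, ← Finset.sum_neg_distrib,
    Finset.sum_congr rfl fun c _ => hterm c, Finset.sum_sub_distrib, ← Finset.sum_mul,
    hcount', natMulLog2]

lemma Multiset.sum_count_comp_le_card {α ι : Type*} [DecidableEq α] [Fintype ι] {g : ι → α}
    (hg : g.Injective) (Q : Multiset α) : ∑ i, Q.count (g i) ≤ Multiset.card Q := by
  calc ∑ i, Q.count (g i) = ∑ x ∈ Finset.univ.image g, Q.count x :=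
        (Finset.sum_image (f := Q.count) fun i _ j _ h => hg h).symm
    _ ≤ ∑ x ∈ Finset.univ.image g ∪ Q.toFinset, Q.count x :=
        Finset.sum_le_sum_of_subset Finset.subset_union_left
    _ = Multiset.card Q := Multiset.sum_count_eq_card fun x hx => by simp [hx]

lemma Multiset.sum_abs_count_add_sub_le {α ι : Type*} [DecidableEq α] [Fintype ι] {g : ι → α}
    (hg : g.Injective) (M Q Q' : Multiset α) :
    ∑ i, |((M + Q).count (g i) : ℝ) - (M + Q').count (g i)|
      ≤ Multiset.card Q + Multiset.card Q' := by
  have hQ := Multiset.sum_count_comp_le_card hg Q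
  have hQ' := Multiset.sum_count_comp_le_card hg Q'
  calc ∑ i, |((M + Q).count (g i) : ℝ) - (M + Q').count (g i)|
      ≤ ∑ i, ((Q.count (g i) : ℝ) + Q'.count (g i)) := by
        refine Finset.sum_le_sum fun i _ => ?_
        simp only [Multiset.count_add, Nat.cast_add, add_sub_add_left_eq_sub]
        exact (abs_sub _ _).trans (by simp)
    _ ≤ Multiset.card Q + Multiset.card Q' := by
        rw [Finset.sum_add_distrib]
        exact add_le_add (by exact_mod_cast hQ) (by exact_mod_cast hQ')

section ContextPairs

variable {A : Type}

def contextPair (k : ℕ) (T : List A) (i : ℕ) : Option (List A × A) :=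
  if k ≤ i then T[i]?.map fun c => ((T.drop (i - k)).take k, c) else none

def contextPairs (k : ℕ) (T : List A) : Multiset (List A × A) :=
  (List.range T.length).filterMap (contextPair k T)

lemma count_contextPairs [DecidableEq A] {k : ℕ} (T : List A) {s : List A} (hs : s.length = k)
    (c : A) :
    (contextPairs k T).count (s, c) = (ctxStr T s).count c := by
  subst hs
  rw [contextPairs, Multiset.count, Multiset.coe_countP, ctxStr, List.count_eq_countP,
    List.countP_filterMap, List.countP_filterMap, List.countP_filter]
  refine List.countP_congr fun i hi => ?_
  by_cases hk : s.length ≤ i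
  · simp only [contextPair, hk, if_true, List.getElem?_eq_getElem (List.mem_range.mp hi),
      Option.map_some, Option.getD_some, decide_eq_true_eq, Prod.mk.injEq, beq_iff_eq,
      Bool.and_eq_true, true_and]
    constructor <;> rintro ⟨h₁, h₂⟩ <;> exact ⟨h₂.symm, h₁.symm⟩
  · simp [contextPair, hk]

lemma card_contextPairs_le (k : ℕ) (T : List A) :
    Multiset.card (contextPairs k T) ≤ T.length := by
  simpa [contextPairs] using List.length_filterMap_le (contextPair k T) (List.range T.length)

lemma contextPair_append_of_lt (k : ℕ) (T L : List A) {i : ℕ} (hi : i < T.length) :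
    contextPair k (T ++ L) i = contextPair k T i := by
  unfold contextPair
  split_ifs with hk
  · rw [List.getElem?_append_left hi, List.drop_append_of_le_length (by omega),
      List.take_append_of_le_length (by rw [List.length_drop]; omega)]
  · rfl

lemma contextPairs_append_singleton (k : ℕ) (T : List A) (a : A) :
    contextPairs k (T ++ [a]) =
      contextPairs k T + if k ≤ T.length then {(T.drop (T.length - k), a)} else 0 := by
  have hprefix : (List.range T.length).filterMap (contextPair k (T ++ [a]))
      = (List.range T.length).filterMap (contextPair k T) :=
    List.filterMap_congr fun i hi => contextPair_append_of_lt k T [a] (List.mem_range.mp hi)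
  rw [contextPairs, contextPairs, List.length_append, List.length_singleton, List.range_succ,
    List.filterMap_append, hprefix, ← Multiset.coe_add, List.filterMap_cons, List.filterMap_nil]
  unfold contextPair
  split_ifs with hk
  · rw [List.getElem?_append_right le_rfl, List.drop_append_of_le_length (by omega),
      List.take_append_of_le_length (by rw [List.length_drop]; omega),
      List.take_of_length_le (by rw [List.length_drop]; omega)]
    simp
  · rfl

lemma exists_contextPairs_append (k : ℕ) (X Y : List A) :
    ∃ Q, Multiset.card Q ≤ min k Y.length ∧
      contextPairs k (X ++ Y) = contextPairs k X + Q + contextPairs k Y := by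
  induction Y using List.reverseRecOn with
  | nil => exact ⟨0, by simp, by simp [contextPairs]⟩
  | append_singleton Y a ih =>
    obtain ⟨Q, hQ, hXY⟩ := ih
    rw [← List.append_assoc, contextPairs_append_singleton, contextPairs_append_singleton, hXY]
    by_cases hY : k ≤ Y.length
    · -- the new pair only sees characters of `Y`
      have hdrop : (X ++ Y).drop ((X ++ Y).length - k) = Y.drop (Y.length - k) := by
        rw [List.length_append, show X.length + Y.length - k = X.length + (Y.length - k) by omega,
          List.drop_length_add_append]
      refine ⟨Q, hQ.trans (by simp), ?_⟩
      rw [if_pos (by rw [List.length_append]; omega), if_pos hY, hdrop]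
      abel
    · set R : Multiset (List A × A) :=
        if k ≤ (X ++ Y).length then {((X ++ Y).drop ((X ++ Y).length - k), a)} else 0
      have hR : Multiset.card R ≤ 1 := by
        simp only [R]; split_ifs <;> simp
      refine ⟨Q + R, ?_, ?_⟩
      · rw [Multiset.card_add, List.length_append, List.length_singleton]
        omega
      · rw [if_neg hY]
        abel

end ContextPairs

section Edit

variable {A : Type}

lemma Edit.length_le {T T' : List A} (h : Edit T T') : T'.length ≤ T.length + 1 := by
  rcases h with ⟨T₁, T₂, c, c', rfl, rfl⟩ | ⟨T₁, T₂, c, rfl, rfl⟩ | ⟨T₁, T₂, c, rfl, rfl⟩ <;>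
    simp only [List.length_append, List.length_cons] <;> omega

lemma length_le_of_edits {f : ℕ → List A} {r : ℕ}
    (hf : ∀ i < r, Edit (f i) (f (i + 1))) : ∀ i ≤ r, (f i).length ≤ (f 0).length + i := by
  intro i hi
  induction i with
  | zero => simp
  | succ i ih =>
    have := (hf i hi).length_le
    have := ih (by omega)
    omega

lemma exists_contextPairs_append_append (k : ℕ) (T₁ T₂ : List A) {m : List A}
    (hm : m.length ≤ 1) : ∃ R, Multiset.card R ≤ k + 1 ∧
      contextPairs k (T₁ ++ m ++ T₂) = contextPairs k T₁ + contextPairs k T₂ + R := by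
  obtain ⟨Q, hQ, hsplit⟩ := exists_contextPairs_append k (T₁ ++ m) T₂
  match m, hm with
  | [], _ =>
    refine ⟨Q, hQ.trans ((min_le_left _ _).trans k.le_succ), ?_⟩
    rw [hsplit, List.append_nil]
    abel
  | [c], _ =>
    set P : Multiset (List A × A) :=
      if k ≤ T₁.length then {(T₁.drop (T₁.length - k), c)} else 0
    have hP : Multiset.card P ≤ 1 := by
      simp only [P]; split_ifs <;> simp
    refine ⟨P + Q, by rw [Multiset.card_add]; omega, ?_⟩
    rw [hsplit, contextPairs_append_singleton]
    abel

lemma Edit.exists_contextPairs_eq (k : ℕ) {T T' : List A} (h : Edit T T') :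
    ∃ M Q Q', Multiset.card Q ≤ k + 1 ∧ Multiset.card Q' ≤ k + 1 ∧
      contextPairs k T = M + Q ∧ contextPairs k T' = M + Q' := by
  obtain ⟨T₁, T₂, m, m', hm, hm', rfl, rfl⟩ : ∃ T₁ T₂ m m' : List A,
      m.length ≤ 1 ∧ m'.length ≤ 1 ∧ T = T₁ ++ m ++ T₂ ∧ T' = T₁ ++ m' ++ T₂ := by
    rcases h with ⟨T₁, T₂, c, c', rfl, rfl⟩ | ⟨T₁, T₂, c, rfl, rfl⟩ | ⟨T₁, T₂, c, rfl, rfl⟩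
    · exact ⟨T₁, T₂, [c], [c'], by simp, by simp, List.append_cons .., List.append_cons ..⟩
    · exact ⟨T₁, T₂, [], [c], by simp, by simp, by simp, List.append_cons ..⟩
    · exact ⟨T₁, T₂, [c], [], by simp, by simp, List.append_cons .., by simp⟩
  obtain ⟨R, hR, hT⟩ := exists_contextPairs_append_append k T₁ T₂ hm
  obtain ⟨R', hR', hT'⟩ := exists_contextPairs_append_append k T₁ T₂ hm'
  exact ⟨_, R, R', hR, hR', hT, hT'⟩

end Edit

section EmpiricalEntropy

variable {A : Type} [Fintype A] [DecidableEq A]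

lemma length_mul_Hk (k : ℕ) (T : List A) :
    T.length * Hk k T =
      ∑ s : Fin k → A, totalEntropy fun c => (contextPairs k T).count (List.ofFn s, c) := by
  have hctx : ∀ s : Fin k → A, (ctxStr T (List.ofFn s)).length * H0 (ctxStr T (List.ofFn s))
      = totalEntropy fun c => (contextPairs k T).count (List.ofFn s, c) := by
    intro s
    simp only [length_mul_H0, count_contextPairs T (List.length_ofFn (f := s))]
  rcases Nat.eq_zero_or_pos T.length with hT | hT
  · simp [List.length_eq_zero_iff.mp hT, contextPairs, totalEntropy, natMulLog2]
  · rw [Hk, ← mul_assoc, mul_one_div_cancel (by positivity), one_mul]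
    exact Finset.sum_congr rfl fun s _ => hctx s

lemma sum_count_contextPairs_le (k : ℕ) (T : List A) (s : Fin k → A) :
    ∑ c, (contextPairs k T).count (List.ofFn s, c) ≤ T.length :=
  (Multiset.sum_count_comp_le_card (Prod.mk_right_injective _) _).trans
    (card_contextPairs_le k T)

lemma abs_length_mul_Hk_sub_le_of_edit (k : ℕ) {N : ℕ} {T T' : List A} (h : Edit T T')
    (hT : T.length ≤ N) (hT' : T'.length ≤ N) :
    |T.length * Hk k T - T'.length * Hk k T'| ≤ 4 * (k + 1) * (Real.logb 2 N + 2) := by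
  obtain ⟨M, Q, Q', hQ, hQ', hMQ, hMQ'⟩ := h.exists_contextPairs_eq k
  have hB : 0 ≤ Real.logb 2 N + 2 := by linarith [logb_two_natCast_nonneg N]
  have hdist : ∑ s : Fin k → A, ∑ c, |((M + Q).count (List.ofFn s, c) : ℝ)
      - (M + Q').count (List.ofFn s, c)| ≤ 2 * (k + 1) := by
    rw [← Fintype.sum_prod_type']
    refine (Multiset.sum_abs_count_add_sub_le
      (g := fun x : (Fin k → A) × A => (List.ofFn x.1, x.2)) (fun x y hxy => ?_) M Q Q').trans ?_
    · simp only [Prod.mk.injEq] at hxy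
      exact Prod.ext (List.ofFn_injective hxy.1) hxy.2
    · have : (Multiset.card Q : ℝ) + Multiset.card Q' ≤ (k + 1) + (k + 1) := by
        exact_mod_cast add_le_add hQ hQ'
      linarith
  rw [length_mul_Hk, length_mul_Hk, ← Finset.sum_sub_distrib]
  calc _ ≤ ∑ s : Fin k → A, 2 * (Real.logb 2 N + 2) * ∑ c, |((contextPairs k T).count
          (List.ofFn s, c) : ℝ) - (contextPairs k T').count (List.ofFn s, c)| :=
        (Finset.abs_sum_le_sum_abs _ _).trans <| Finset.sum_le_sum fun s _ =>
          abs_totalEntropy_sub_le _ _ ((sum_count_contextPairs_le k T s).trans hT)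
            ((sum_count_contextPairs_le k T' s).trans hT')
    _ ≤ 2 * (Real.logb 2 N + 2) * (2 * (k + 1)) := by
        rw [← Finset.mul_sum, hMQ, hMQ']
        exact mul_le_mul_of_nonneg_left hdist (by positivity)
    _ = _ := by ring

lemma abs_length_mul_Hk_sub_le_of_edits (k : ℕ) {N r : ℕ} (f : ℕ → List A)
    (hf : ∀ i < r, Edit (f i) (f (i + 1))) (hN : ∀ i ≤ r, (f i).length ≤ N) :
    |(f 0).length * Hk k (f 0) - (f r).length * Hk k (f r)|
      ≤ r * (4 * (k + 1) * (Real.logb 2 N + 2)) := by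
  calc _ ≤ ∑ i ∈ Finset.range r,
          |(f i).length * Hk k (f i) - (f (i + 1)).length * Hk k (f (i + 1))| :=
        dist_le_range_sum_dist (fun i => (f i).length * Hk k (f i)) r
    _ ≤ (Finset.range r).card • (4 * (k + 1) * (Real.logb 2 N + 2)) :=
        Finset.sum_le_card_nsmul _ _ _ fun i hi => by
          have hi := Finset.mem_range.mp hi
          exact abs_length_mul_Hk_sub_le_of_edit k (hf i hi) (hN i hi.le) (hN (i + 1) hi)
    _ = _ := by simp

lemma Hk_eq_zero_of_subsingleton [Subsingleton A] (k : ℕ) (T : List A) : Hk k T = 0 := by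
  have hH0 : ∀ S : List A, H0 S = 0 := by
    intro S
    refine neg_eq_zero.mpr (Finset.sum_eq_zero fun c _ => ?_)
    rw [List.count_eq_length.mpr fun b _ => Subsingleton.elim c b]
    rcases Nat.eq_zero_or_pos S.length with h | h
    · simp [h]
    · simp [div_self (by positivity : (S.length : ℝ) ≠ 0)]
  simp [Hk, hH0]

end EmpiricalEntropy

theorem stmt17 : ∃ C : ℝ, 0 < C ∧
    ∀ (A : Type) (_ : Fintype A) (_ : DecidableEq A) (T T' : List A) (r k : ℕ)
      (f : ℕ → List A), f 0 = T → f r = T' → (∀ i < r, Edit (f i) (f (i + 1))) →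
      T'.length ≤ T.length + r →
      |(T.length : ℝ) * Hk k T - (T'.length : ℝ) * Hk k T'| ≤
        C * r * (k + 1) * (Real.logb 2 (T.length + r) + Real.logb 2 (Fintype.card A)) := by
  refine ⟨8, by norm_num, ?_⟩
  rintro A _ _ _ _ r k f rfl rfl hf -
  have hN := logb_two_natCast_nonneg ((f 0).length + r)
  push_cast at hN
  rcases le_or_gt (Fintype.card A) 1 with hA | hA
  · have := Fintype.card_le_one_iff_subsingleton.mp hA
    simp only [Hk_eq_zero_of_subsingleton, mul_zero, sub_self, abs_zero]
    have := logb_two_natCast_nonneg (Fintype.card A)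
    positivity
  · -- a nontrivial alphabet gives `log₂ |A| ≥ 1`, which absorbs the additive constant
    have hA : 1 ≤ Real.logb 2 (Fintype.card A) := by
      rw [← Real.logb_self_eq_one one_lt_two]
      exact Real.logb_le_logb_of_le one_lt_two two_pos (by exact_mod_cast hA)
    calc _ ≤ r * (4 * (k + 1) * (Real.logb 2 (((f 0).length + r : ℕ) : ℝ) + 2)) :=
          abs_length_mul_Hk_sub_le_of_edits k f hf fun i hi =>
            (length_le_of_edits hf i hi).trans (by omega)
      _ = 4 * r * (k + 1) * (Real.logb 2 ((f 0).length + r) + 2) := by push_cast; ring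
      _ ≤ 4 * r * (k + 1) * (2 * (Real.logb 2 ((f 0).length + r)
            + Real.logb 2 (Fintype.card A))) := by gcongr; linarith
      _ = _ := by ring
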